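/- arXiv:2410.10304 — 3 statements merged into one kernel-verified Lean document; each statement's English description precedes it below -/
import Mathlib

section
/- Let n ≥ 1, δ ∈ (0,1], θ ∈ (0,δ], γ := δ/(2(2n+δ)), and c > 0. Let F₁, F₂, F₃ : [0,∞) → [0,∞) be bounded with F₁ non-decreasing and F₂, F₃ non-increasing. Let I, J, K, Q ⊂ ℝ^n be cubes with ℓ(K) ≤ 2ℓ(J) and I ∪ J ∪ K ⊂ Q, and suppose max{d(K,I), d(K,J)} > 2 ℓ(K)^γ ℓ(J)^{1−γ} and max{d(K,I), d(K,J)} ≥ c ℓ(K)^γ ℓ(Q)^{1−γ}. Then ∫_J ∫_I ∫_K F₁(|x−c_K|) F₂(|x−y|+|x−z|) F₃(1 + (|x+y|+|x+z|)/(1+|x−y|+|x−z|)) · ℓ(K)^δ / (|x−y|+|x−z|)^{2n+δ} dx dy dz ≤ C (ℓ(K)/ℓ(Q))^{δ/2} F₁(ℓ(K)) F̃₂(ℓ(K)) F̃₃(Q) |I||J||K| / |Q|², where the integral is with respect to Lebesgue measure in x ∈ K, y ∈ I, z ∈ J, and C depends only on n, δ, θ and c. -/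
open MeasureTheory Set
open scoped ENNReal NNReal

noncomputable section

abbrev Rn (n : ℕ) := Fin n → ℝ

/-- A (half-open, axis-parallel) cube in `ℝⁿ` (with the `ℓ^∞` metric),
given by its lower-left corner and its (positive) sidelength. -/
structure Cube (n : ℕ) where
  corner : Fin n → ℝ
  len : ℝ
  len_pos : 0 < len

namespace Cube

/-- The underlying set `∏_i [aᵢ, aᵢ + ℓ)` of a cube. -/
def toSet {n : ℕ} (I : Cube n) : Set (Rn n) :=
  {x | ∀ i, I.corner i ≤ x i ∧ x i < I.corner i + I.len}

/-- The center of a cube. -/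
def center {n : ℕ} (I : Cube n) : Rn n := fun i => I.corner i + I.len / 2

/-- `λI`: the cube with the same center and sidelength `λ ℓ(I)`. -/
def dilate {n : ℕ} (I : Cube n) (lam : ℝ) (hlam : 0 < lam) : Cube n :=
  ⟨fun i => I.center i - lam * I.len / 2, lam * I.len, mul_pos hlam I.len_pos⟩

end Cube

/-- The unit cube `𝕀 = [-1/2, 1/2)^n`. -/
def unitCube (n : ℕ) : Cube n := ⟨fun _ => -(1 / 2 : ℝ), 1, one_pos⟩

/-- The distance `d(E, F) = inf {|x - y| : x ∈ E, y ∈ F}` between two sets. -/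
def sDist {α : Type*} [PseudoMetricSpace α] (E F : Set α) : ℝ :=
  sInf ((fun q : α × α => dist q.1 q.2) '' (E ×ˢ F))

/-- The relative distance `rd(I, J) = d(I, J) / max{ℓ(I), ℓ(J)}` between two cubes. -/
def relDist {n : ℕ} (I J : Cube n) : ℝ :=
  sDist I.toSet J.toSet / max I.len J.len

/-- `F̃₂(t) = Σ_{k=0}^∞ 2^{-kθ} F₂(2^{-k} t)`. -/
def Ft2 (θ : ℝ) (F₂ : ℝ → ℝ) (t : ℝ) : ℝ :=
  ∑' k : ℕ, (2 : ℝ) ^ (-(k : ℝ) * θ) * F₂ ((2 : ℝ) ^ (-(k : ℝ)) * t)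

/-- `F̃₃(Q) = Σ_{k=0}^∞ 2^{-kθ} F₃(rd(2^k Q, 𝕀))`. -/
def Ft3 {n : ℕ} (θ : ℝ) (F₃ : ℝ → ℝ) (Q : Cube n) : ℝ :=
  ∑' k : ℕ, (2 : ℝ) ^ (-(k : ℝ) * θ) *
    F₃ (relDist (Q.dilate ((2 : ℝ) ^ k) (by positivity)) (unitCube n))

/-! The estimate holds pointwise on `K × I × J`. Since `ℓ(K) ≤ 2ℓ(J)`, the first separation
hypothesis gives `|x - y| + |x - z| ≥ max{d(K,I), d(K,J)} > ℓ(K)`, so `F₁(|x - c_K|) ≤ F₁(ℓ(K))`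
and `F₂(|x - y| + |x - z|) ≤ F₂(ℓ(K))`, the `k = 0` term of `F̃₂(ℓ(K))`. Since `x, y, z ∈ Q`, the
argument of `F₃` is at least `|c_Q| / max{ℓ(Q), 1} ≥ rd(Q, 𝕀)`, so the `F₃` factor is at most the
`k = 0` term of `F̃₃(Q)`. Raising the second separation hypothesis to the power `2n + δ` bounds
`ℓ(K)^δ / (|x - y| + |x - z|)^(2n+δ)` by `c^-(2n+δ) (ℓ(K)/ℓ(Q))^(δ/2) ℓ(Q)^-2n`, and
`|Q|² = ℓ(Q)^2n`. Integrating this constant bound gives the claim with `C = c^-(2n+δ)`. -/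

lemma summable_two_rpow_neg_mul {θ : ℝ} (hθ : 0 < θ) {g : ℕ → ℝ} (hg : ∀ k, 0 ≤ g k)
    (hgb : BddAbove (range g)) : Summable fun k : ℕ => (2 : ℝ) ^ (-(k : ℝ) * θ) * g k := by
  obtain ⟨M, hM⟩ := hgb
  have hr : (2 : ℝ) ^ (-θ) < 1 := Real.rpow_lt_one_of_one_lt_of_neg one_lt_two (neg_lt_zero.2 hθ)
  refine .of_nonneg_of_le (fun k => by positivity [hg k]) (fun k => ?_)
    ((summable_geometric_of_lt_one (by positivity) hr).mul_right M)
  have hk : (2 : ℝ) ^ (-(k : ℝ) * θ) = ((2 : ℝ) ^ (-θ)) ^ k := by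
    rw [← Real.rpow_natCast, ← Real.rpow_mul zero_le_two]
    ring_nf
  rw [hk]
  exact mul_le_mul_of_nonneg_left (hM ⟨k, rfl⟩) (by positivity)

lemma le_tsum_two_rpow_neg_mul {θ : ℝ} (hθ : 0 < θ) {g : ℕ → ℝ} (hg : ∀ k, 0 ≤ g k)
    (hgb : BddAbove (range g)) : g 0 ≤ ∑' k : ℕ, (2 : ℝ) ^ (-(k : ℝ) * θ) * g k := by
  simpa using (summable_two_rpow_neg_mul hθ hg hgb).le_tsum 0 fun k _ => by positivity [hg k]

lemma lt_of_two_mul_rpow_mul_rpow_lt {K J D γ : ℝ} (hK : 0 < K) (hJ : 0 < J) (hγ0 : 0 ≤ γ)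
    (hγ1 : γ ≤ 1) (hKJ : K ≤ 2 * J) (hD : 2 * K ^ γ * J ^ (1 - γ) < D) : K < D :=
  calc K = K ^ γ * K ^ (1 - γ) := by rw [← Real.rpow_add hK]; norm_num
    _ ≤ K ^ γ * (2 ^ (1 - γ) * J ^ (1 - γ)) := by
      rw [← Real.mul_rpow zero_le_two hJ.le]
      gcongr
    _ ≤ K ^ γ * (2 * J ^ (1 - γ)) := by
      gcongr
      exact Real.rpow_le_self_of_one_le one_le_two (by linarith)
    _ < D := by linarith

lemma rpow_div_rpow_le_of_le {K Q c d δ s : ℝ} (hK : 0 < K) (hQ : 0 < Q) (hc : 0 < c)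
    (hd : 0 ≤ d) (hδ : 0 < δ)
    (hs : c * K ^ (δ / (2 * (d + δ))) * Q ^ (1 - δ / (2 * (d + δ))) ≤ s) :
    K ^ δ / s ^ (d + δ) ≤ (c ^ (d + δ))⁻¹ * (K / Q) ^ (δ / 2) / Q ^ d := by
  set p := d + δ
  have hp : 0 < p := by positivity
  have hbase : (c * K ^ (δ / (2 * p)) * Q ^ (1 - δ / (2 * p))) ^ p
      = c ^ p * K ^ (δ / 2) * Q ^ (d + δ / 2) := by
    rw [Real.mul_rpow (by positivity) (by positivity), Real.mul_rpow hc.le (by positivity),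
      ← Real.rpow_mul hK.le, ← Real.rpow_mul hQ.le]
    congr 3
    · field_simp
    · field_simp
      ring
  have hsp : c ^ p * K ^ (δ / 2) * Q ^ (d + δ / 2) ≤ s ^ p :=
    hbase ▸ Real.rpow_le_rpow (by positivity) hs hp.le
  calc K ^ δ / s ^ p ≤ K ^ δ / (c ^ p * K ^ (δ / 2) * Q ^ (d + δ / 2)) := by
        gcongr
    _ = (c ^ p)⁻¹ * (K / Q) ^ (δ / 2) / Q ^ d := by
      rw [Real.div_rpow hK.le hQ.le, Real.rpow_add hQ, ← add_halves δ, Real.rpow_add hK,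
        add_halves]
      field_simp

lemma setLIntegral_le_mul_measure {α : Type*} [MeasurableSpace α] {μ : Measure α} {s : Set α}
    {f : α → ℝ≥0∞} {b : ℝ≥0∞} (h : ∀ x ∈ s, f x ≤ b) : ∫⁻ x in s, f x ∂μ ≤ b * μ s :=
  (setLIntegral_mono measurable_const h).trans_eq (setLIntegral_const s b)

lemma setLIntegral_setLIntegral_setLIntegral_le {α β γ : Type*} [MeasurableSpace α]
    [MeasurableSpace β] [MeasurableSpace γ] {μ : Measure α} {ν : Measure β} {ρ : Measure γ}
    {A : Set α} {B : Set β} {C : Set γ} {f : γ → β → α → ℝ≥0∞} {b : ℝ≥0∞}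
    (h : ∀ z ∈ C, ∀ y ∈ B, ∀ x ∈ A, f z y x ≤ b) :
    ∫⁻ z in C, ∫⁻ y in B, ∫⁻ x in A, f z y x ∂μ ∂ν ∂ρ ≤ b * μ A * ν B * ρ C :=
  setLIntegral_le_mul_measure fun z hz => setLIntegral_le_mul_measure fun y hy =>
    setLIntegral_le_mul_measure (h z hz y hy)

namespace Cube

variable {n : ℕ}

lemma toSet_eq_pi (I : Cube n) :
    I.toSet = Set.pi univ fun i => Ico (I.corner i) (I.corner i + I.len) := by
  ext x
  simp [toSet, Set.mem_pi]

lemma volume_toSet (I : Cube n) : volume I.toSet = ENNReal.ofReal (I.len ^ n) := by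
  rw [toSet_eq_pi, volume_pi_pi]
  simp [Real.volume_Ico, ENNReal.ofReal_pow I.len_pos.le]

lemma dist_center_le {I : Cube n} {x : Rn n} (hx : x ∈ I.toSet) :
    dist x I.center ≤ I.len / 2 := by
  refine (dist_pi_le_iff (by linarith [I.len_pos])).2 fun i => ?_
  rw [Real.dist_eq, abs_le]
  constructor <;> linarith [hx i, show I.center i = I.corner i + I.len / 2 from rfl]

lemma dist_le_len {I : Cube n} {x y : Rn n} (hx : x ∈ I.toSet) (hy : y ∈ I.toSet) :
    dist x y ≤ I.len := by
  refine (dist_pi_le_iff I.len_pos.le).2 fun i => ?_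
  rw [Real.dist_eq, abs_le]
  constructor <;> linarith [hx i, hy i]

lemma center_mem_toSet (I : Cube n) : I.center ∈ I.toSet := fun i => by
  constructor <;> simp only [center] <;> linarith [I.len_pos]

lemma center_dilate (I : Cube n) (lam : ℝ) (hlam : 0 < lam) :
    (I.dilate lam hlam).center = I.center := by
  ext i
  simp only [center, dilate]
  ring

lemma len_dilate (I : Cube n) (lam : ℝ) (hlam : 0 < lam) :
    (I.dilate lam hlam).len = lam * I.len :=
  rfl

lemma two_mul_norm_center_sub_len_le_norm_add {I : Cube n} {u v : Rn n} (hu : u ∈ I.toSet)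
    (hv : v ∈ I.toSet) :
    2 * ‖I.center‖ - I.len ≤ ‖u + v‖ := by
  have hcu := dist_center_le hu
  have hcv := dist_center_le hv
  rw [dist_eq_norm] at hcu hcv
  have h2c : ‖I.center + I.center‖ = 2 * ‖I.center‖ := by
    rw [← two_smul ℝ, norm_smul, Real.norm_two]
  have htri : ‖I.center + I.center‖ ≤ ‖u + v‖ + ‖(u - I.center) + (v - I.center)‖ :=
    calc ‖I.center + I.center‖ = ‖(u + v) - ((u - I.center) + (v - I.center))‖ := by
          congr 1; abel
      _ ≤ _ := norm_sub_le _ _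
  linarith [norm_add_le (u - I.center) (v - I.center)]

end Cube

lemma sDist_nonneg {α : Type*} [PseudoMetricSpace α] (E F : Set α) : 0 ≤ sDist E F :=
  Real.sInf_nonneg <| by
    rintro _ ⟨q, -, rfl⟩
    exact dist_nonneg

lemma sDist_le_dist {α : Type*} [PseudoMetricSpace α] {E F : Set α} {x y : α}
    (hx : x ∈ E) (hy : y ∈ F) : sDist E F ≤ dist x y :=
  csInf_le ⟨0, by rintro _ ⟨q, -, rfl⟩; exact dist_nonneg⟩ ⟨(x, y), ⟨hx, hy⟩, rfl⟩

lemma relDist_unitCube_le {n : ℕ} (R : Cube n) :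
    relDist R (unitCube n) ≤ ‖R.center‖ / max R.len 1 := by
  have h0 : (0 : Rn n) ∈ (unitCube n).toSet := fun _ => by norm_num [unitCube]
  have hR := sDist_le_dist R.center_mem_toSet h0
  rw [dist_zero_right] at hR
  exact div_le_div_of_nonneg_right hR (lt_max_of_lt_right one_pos).le

lemma relDist_nonneg {n : ℕ} (I J : Cube n) : 0 ≤ relDist I J :=
  div_nonneg (sDist_nonneg _ _) (le_max_of_le_left I.len_pos.le)

lemma Cube.norm_center_div_max_le {n : ℕ} {Q : Cube n} {x y z : Rn n}
    (hx : x ∈ Q.toSet) (hy : y ∈ Q.toSet) (hz : z ∈ Q.toSet) :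
    ‖Q.center‖ / max Q.len 1 ≤ 1 + (‖x + y‖ + ‖x + z‖) / (1 + dist x y + dist x z) := by
  set m := max Q.len 1
  set t := (‖x + y‖ + ‖x + z‖) / (1 + dist x y + dist x z)
  have hm : 0 < m := lt_max_of_lt_right one_pos
  have hden : 0 < 1 + dist x y + dist x z := by positivity
  have ht : 0 ≤ t := by positivity
  have hmt : t * (1 + dist x y + dist x z) = ‖x + y‖ + ‖x + z‖ := div_mul_cancel₀ _ hden.ne'
  have h3m : 1 + dist x y + dist x z ≤ 3 * m := by
    linarith [Q.dist_le_len hx hy, Q.dist_le_len hx hz, le_max_left Q.len 1,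
      le_max_right Q.len 1]
  rw [div_le_iff₀ hm]
  -- `3 m t ≥ t (1 + dist x y + dist x z) ≥ 4‖c_Q‖ - 2ℓ(Q)` and `ℓ(Q) ≤ m`
  nlinarith [Q.two_mul_norm_center_sub_len_le_norm_add hx hy,
    Q.two_mul_norm_center_sub_len_le_norm_add hx hz, mul_le_mul_of_nonneg_left h3m ht,
    le_max_left Q.len 1, norm_nonneg Q.center]

lemma apply_le_Ft2 {θ : ℝ} (hθ : 0 < θ) {F : ℝ → ℝ} (hF : ∀ t, 0 ≤ F t)
    (hFb : BddAbove (range F)) (hFa : AntitoneOn F (Ici 0)) {t s : ℝ} (ht : 0 ≤ t)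
    (hts : t ≤ s) : F s ≤ Ft2 θ F t := by
  have h0 := le_tsum_two_rpow_neg_mul hθ (g := fun k : ℕ => F ((2 : ℝ) ^ (-(k : ℝ)) * t))
    (fun _ => hF _) (hFb.mono (range_comp_subset_range _ F))
  simp only [CharP.cast_eq_zero, neg_zero, Real.rpow_zero, one_mul] at h0
  exact (hFa ht (ht.trans hts) hts).trans h0

lemma apply_le_Ft3 {n : ℕ} {θ : ℝ} (hθ : 0 < θ) {F : ℝ → ℝ} (hF : ∀ t, 0 ≤ F t)
    (hFb : BddAbove (range F)) (hFa : AntitoneOn F (Ici 0)) {Q : Cube n} {x y z : Rn n}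
    (hx : x ∈ Q.toSet) (hy : y ∈ Q.toSet) (hz : z ∈ Q.toSet) :
    F (1 + (‖x + y‖ + ‖x + z‖) / (1 + dist x y + dist x z)) ≤ Ft3 θ F Q := by
  have h0 := le_tsum_two_rpow_neg_mul hθ
    (g := fun k : ℕ => F (relDist (Q.dilate ((2 : ℝ) ^ k) (by positivity)) (unitCube n)))
    (fun _ => hF _) (hFb.mono (range_comp_subset_range _ F))
  have hrd := relDist_unitCube_le (Q.dilate ((2 : ℝ) ^ 0) (by positivity))
  rw [Cube.center_dilate, Cube.len_dilate] at hrd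
  refine (hFa (relDist_nonneg _ _) (mem_Ici.2 (by positivity)) ?_).trans h0
  refine hrd.trans ?_
  simpa only [pow_zero, one_mul] using Q.norm_center_div_max_le hx hy hz

lemma le_mul_Ft2_mul_Ft3 {n : ℕ} {θ : ℝ} (hθ : 0 < θ) {F₁ F₂ F₃ : ℝ → ℝ}
    (hF₁ : ∀ t, 0 ≤ F₁ t) (hF₂ : ∀ t, 0 ≤ F₂ t) (hF₃ : ∀ t, 0 ≤ F₃ t)
    (hF₂b : BddAbove (range F₂)) (hF₃b : BddAbove (range F₃)) (hF₁m : MonotoneOn F₁ (Ici 0))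
    (hF₂a : AntitoneOn F₂ (Ici 0)) (hF₃a : AntitoneOn F₃ (Ici 0)) {K Q : Cube n}
    {x y z : Rn n} (hxK : x ∈ K.toSet) (hx : x ∈ Q.toSet) (hy : y ∈ Q.toSet) (hz : z ∈ Q.toSet)
    (hKs : K.len ≤ dist x y + dist x z) :
    F₁ (dist x K.center) * F₂ (dist x y + dist x z) *
        F₃ (1 + (‖x + y‖ + ‖x + z‖) / (1 + dist x y + dist x z)) ≤
      F₁ K.len * Ft2 θ F₂ K.len * Ft3 θ F₃ Q := by
  have h₁ : F₁ (dist x K.center) ≤ F₁ K.len :=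
    hF₁m dist_nonneg K.len_pos.le (by linarith [K.dist_center_le hxK, K.len_pos])
  have h₂ := apply_le_Ft2 hθ hF₂ hF₂b hF₂a K.len_pos.le hKs
  have h₃ := apply_le_Ft3 hθ hF₃ hF₃b hF₃a hx hy hz
  exact mul_le_mul (mul_le_mul h₁ h₂ (hF₂ _) (hF₁ _)) h₃ (hF₃ _)
    (mul_nonneg (hF₁ _) ((hF₂ _).trans h₂))

theorem separated_integral_estimate_general
    (n : ℕ) (δ θ c : ℝ)
    (hδ0 : 0 < δ) (hθ0 : 0 < θ) (hc : 0 < c) :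
    ∃ C : ℝ, 0 < C ∧
      ∀ F₁ F₂ F₃ : ℝ → ℝ,
        (∀ t, 0 ≤ F₁ t) → (∀ t, 0 ≤ F₂ t) → (∀ t, 0 ≤ F₃ t) →
        BddAbove (Set.range F₁) → BddAbove (Set.range F₂) → BddAbove (Set.range F₃) →
        MonotoneOn F₁ (Set.Ici 0) → AntitoneOn F₂ (Set.Ici 0) → AntitoneOn F₃ (Set.Ici 0) →
        ∀ I J K Q : Cube n,
          K.len ≤ 2 * J.len →
          I.toSet ∪ J.toSet ∪ K.toSet ⊆ Q.toSet →
          2 * K.len ^ (δ / (2 * (2 * (n : ℝ) + δ))) *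
              J.len ^ (1 - δ / (2 * (2 * (n : ℝ) + δ))) <
            max (sDist K.toSet I.toSet) (sDist K.toSet J.toSet) →
          c * K.len ^ (δ / (2 * (2 * (n : ℝ) + δ))) *
              Q.len ^ (1 - δ / (2 * (2 * (n : ℝ) + δ))) ≤
            max (sDist K.toSet I.toSet) (sDist K.toSet J.toSet) →
          (∫⁻ z in J.toSet, ∫⁻ y in I.toSet, ∫⁻ x in K.toSet,
              ENNReal.ofReal
                (F₁ (dist x K.center) * F₂ (dist x y + dist x z) *
                  F₃ (1 + (‖x + y‖ + ‖x + z‖) / (1 + dist x y + dist x z)) *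
                  K.len ^ δ / (dist x y + dist x z) ^ (2 * (n : ℝ) + δ))) ≤
            ENNReal.ofReal
              (C * (K.len / Q.len) ^ (δ / 2) * F₁ K.len * Ft2 θ F₂ K.len * Ft3 θ F₃ Q *
                ((volume I.toSet).toReal * (volume J.toSet).toReal *
                  (volume K.toSet).toReal) / (volume Q.toSet).toReal ^ 2) := by
  refine ⟨(c ^ (2 * (n : ℝ) + δ))⁻¹, by positivity, ?_⟩
  intro F₁ F₂ F₃ hF₁ hF₂ hF₃ _ hF₂b hF₃b hF₁m hF₂a hF₃a I J K Q hKJ hsub hsepJ hsepQ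
  have hKD : K.len < max (sDist K.toSet I.toSet) (sDist K.toSet J.toSet) :=
    lt_of_two_mul_rpow_mul_rpow_lt K.len_pos J.len_pos (by positivity)
      (div_le_one_of_le₀ (by linarith [n.cast_nonneg (α := ℝ)]) (by positivity)) hKJ hsepJ
  have hQn : Q.len ^ (2 * (n : ℝ)) = (Q.len ^ n) ^ 2 := by
    rw [mul_comm, Real.rpow_mul Q.len_pos.le, Real.rpow_natCast]
    norm_cast
  refine (setLIntegral_setLIntegral_setLIntegral_le (b := ENNReal.ofReal
    ((c ^ (2 * (n : ℝ) + δ))⁻¹ * (K.len / Q.len) ^ (δ / 2) * F₁ K.len * Ft2 θ F₂ K.len *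
      Ft3 θ F₃ Q / (Q.len ^ n) ^ 2)) fun z hz y hy x hx =>
        ENNReal.ofReal_le_ofReal ?_).trans_eq ?_
  · have hDs : max (sDist K.toSet I.toSet) (sDist K.toSet J.toSet) ≤ dist x y + dist x z :=
      max_le ((sDist_le_dist hx hy).trans (le_add_of_nonneg_right dist_nonneg))
        ((sDist_le_dist hx hz).trans (le_add_of_nonneg_left dist_nonneg))
    have hF := le_mul_Ft2_mul_Ft3 hθ0 hF₁ hF₂ hF₃ hF₂b hF₃b hF₁m hF₂a hF₃a hx
      (hsub (.inr hx)) (hsub (.inl (.inl hy))) (hsub (.inl (.inr hz))) (hKD.le.trans hDs)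
    have hP := rpow_div_rpow_le_of_le K.len_pos Q.len_pos hc (by positivity) hδ0
      (hsepQ.trans hDs)
    rw [hQn] at hP
    rw [mul_div_assoc]
    refine (mul_le_mul hF hP (by positivity [K.len_pos]) (hF.trans' ?_)).trans_eq (by ring)
    exact mul_nonneg (mul_nonneg (hF₁ _) (hF₂ _)) (hF₃ _)
  · simp only [Cube.volume_toSet, ENNReal.toReal_ofReal (pow_nonneg (Cube.len_pos _).le n),
      ← ENNReal.ofReal_mul' (pow_nonneg (Cube.len_pos _).le n)]
    congr 1
    ring

/-- the separated-cubes integral estimate, Lemma `𝒫`. -/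
theorem separated_integral_estimate
    (n : ℕ) (hn : 1 ≤ n) (δ θ c : ℝ)
    (hδ0 : 0 < δ) (hδ1 : δ ≤ 1) (hθ0 : 0 < θ) (hθδ : θ ≤ δ) (hc : 0 < c) :
    ∃ C : ℝ, 0 < C ∧
      ∀ F₁ F₂ F₃ : ℝ → ℝ,
        (∀ t, 0 ≤ F₁ t) → (∀ t, 0 ≤ F₂ t) → (∀ t, 0 ≤ F₃ t) →
        BddAbove (Set.range F₁) → BddAbove (Set.range F₂) → BddAbove (Set.range F₃) →
        MonotoneOn F₁ (Set.Ici 0) → AntitoneOn F₂ (Set.Ici 0) → AntitoneOn F₃ (Set.Ici 0) →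
        ∀ I J K Q : Cube n,
          K.len ≤ 2 * J.len →
          I.toSet ∪ J.toSet ∪ K.toSet ⊆ Q.toSet →
          2 * K.len ^ (δ / (2 * (2 * (n : ℝ) + δ))) *
              J.len ^ (1 - δ / (2 * (2 * (n : ℝ) + δ))) <
            max (sDist K.toSet I.toSet) (sDist K.toSet J.toSet) →
          c * K.len ^ (δ / (2 * (2 * (n : ℝ) + δ))) *
              Q.len ^ (1 - δ / (2 * (2 * (n : ℝ) + δ))) ≤
            max (sDist K.toSet I.toSet) (sDist K.toSet J.toSet) →
          (∫⁻ z in J.toSet, ∫⁻ y in I.toSet, ∫⁻ x in K.toSet,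
              ENNReal.ofReal
                (F₁ (dist x K.center) * F₂ (dist x y + dist x z) *
                  F₃ (1 + (‖x + y‖ + ‖x + z‖) / (1 + dist x y + dist x z)) *
                  K.len ^ δ / (dist x y + dist x z) ^ (2 * (n : ℝ) + δ))) ≤
            ENNReal.ofReal
              (C * (K.len / Q.len) ^ (δ / 2) * F₁ K.len * Ft2 θ F₂ K.len * Ft3 θ F₃ Q *
                ((volume I.toSet).toReal * (volume J.toSet).toReal *
                  (volume K.toSet).toReal) / (volume Q.toSet).toReal ^ 2) :=
  separated_integral_estimate_general n δ θ c hδ0 hθ0 hc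
end
end

section
/- Let n₁, n₂ ≥ 1, let D¹ = D_{ω₁} and D² = D_{ω₂} be dyadic grids on ℝ^{n₁} and ℝ^{n₂} respectively, and let D := {R¹ × R² : R¹ ∈ D¹, R² ∈ D²} be the associated family of dyadic rectangles in ℝ^{n₁}×ℝ^{n₂}. Let (λ_R)_{R∈D} be a family of non-negative real numbers. Then the following are equivalent, and each implication preserves the constant: (i) there is C < ∞ such that Σ_{R∈D, R⊂U} λ_R ≤ C|U| for every Lebesgue measurable set U ⊂ ℝ^{n₁}×ℝ^{n₂} (this is the Carleson condition; since the sum only involves the rectangles contained in U, it is equivalent to the same condition restricted to sets U that are unions of rectangles from D); (ii) there is C < ∞ such that for every family (a_R)_{R∈D} of non-negative real numbers, Σ_{R∈D} λ_R a_R ≤ C ∫_{ℝ^{n₁}×ℝ^{n₂}} sup{a_R : R ∈ D, x ∈ R} dx, where the supremum of the empty set is 0 and the integral is the Lebesgue (outer) integral. -/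
/-!
For (ii) ⇒ (i) test (ii) with `a_R = 1` for `R ⊆ U` and `a_R = 0` otherwise: the maximal
function is then at most `1_U`.
For (i) ⇒ (ii) it suffices to bound finite partial sums. For finitely many rectangles, by the
layer-cake formula `Σ λ_R a_R = ∫₀^∞ Σ_{a_R > t} λ_R dt`; the rectangles with `a_R > t` lie in
their union, a measurable subset of `{M > t}` (with `M` the maximal function of the finite
family), so (i) bounds the inner sum by `C |{M > t}|`, and integrating in `t` gives `C ∫ M`.
-/

open MeasureTheory Set
open scoped ENNReal NNReal

noncomputable section

/-- The cube `2^{-k}([0,1)^n + m) + Σ_{j > k} 2^{-j} ω^j` of the random dyadic grid `D_ω`. -/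
def gridCube (n : ℕ) (ω : ℤ → Rn n) (k : ℤ) (m : Fin n → ℤ) : Cube n :=
  ⟨fun i => (2 : ℝ) ^ (-k) * (m i : ℝ) + ∑' j : {j : ℤ // k < j}, (2 : ℝ) ^ (-j.1) * ω j.1 i,
   (2 : ℝ) ^ (-k), by positivity⟩

/-- Membership in the dyadic grid `D_ω`. -/
def memGrid {n : ℕ} (ω : ℤ → Rn n) (I : Cube n) : Prop :=
  ∃ (k : ℤ) (m : Fin n → ℤ), I = gridCube n ω k m

/-- `ω` is an admissible dyadic-grid parameter: `ω^j ∈ {0,1}^n` for all `j ∈ ℤ`. -/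
def IsGridParam {n : ℕ} (ω : ℤ → Rn n) : Prop :=
  ∀ (j : ℤ) (i : Fin n), ω j i = 0 ∨ ω j i = 1

/-- `K ∈ D_ω` is good (with parameters `r`, `γ`) if every `J ∈ D_ω` with
`ℓ(J) ≥ 2^r ℓ(K)` satisfies `d(K, ∂J) > 2 ℓ(K)^γ ℓ(J)^{1-γ}`. -/
def IsGoodCube {n : ℕ} (ω : ℤ → Rn n) (r : ℕ) (γ : ℝ) (K : Cube n) : Prop :=
  ∀ J : Cube n, memGrid ω J → (2 : ℝ) ^ r * K.len ≤ J.len →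
    2 * K.len ^ γ * J.len ^ (1 - γ) < sDist K.toSet (frontier J.toSet)

abbrev Rnn (n₁ n₂ : ℕ) := Rn n₁ × Rn n₂

/-- A dyadic rectangle `R¹ × R²` with `R¹ ∈ D_{ω₁}`, `R² ∈ D_{ω₂}`. -/
def IsBiGridRect {n₁ n₂ : ℕ} (ω₁ : ℤ → Rn n₁) (ω₂ : ℤ → Rn n₂)
    (R : Set (Rnn n₁ n₂)) : Prop :=
  ∃ (I : Cube n₁) (J : Cube n₂), memGrid ω₁ I ∧ memGrid ω₂ J ∧ R = I.toSet ×ˢ J.toSet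

lemma Cube.measurableSet_toSet {n : ℕ} (I : Cube n) : MeasurableSet I.toSet := by
  have h : I.toSet = univ.pi fun i => Ico (I.corner i) (I.corner i + I.len) := by
    ext x; simp [Cube.toSet, mem_pi]
  rw [h]
  exact MeasurableSet.univ_pi fun _ => measurableSet_Ico

lemma IsBiGridRect.measurableSet {n₁ n₂ : ℕ} {ω₁ : ℤ → Rn n₁} {ω₂ : ℤ → Rn n₂}
    {R : Set (Rnn n₁ n₂)} (h : IsBiGridRect ω₁ ω₂ R) : MeasurableSet R := by
  obtain ⟨I, J, -, -, rfl⟩ := h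
  exact I.measurableSet_toSet.prod J.measurableSet_toSet

lemma mul_coe_eq_setLIntegral_indicator_Iio (c : ℝ≥0∞) (a : ℝ≥0) :
    c * a = ∫⁻ t in Ioi (0 : ℝ), (Iio (a : ℝ)).indicator (fun _ => c) t := by
  rw [lintegral_indicator_const measurableSet_Iio, Measure.restrict_apply measurableSet_Iio,
    Iio_inter_Ioi, Real.volume_Ioo, sub_zero, ENNReal.ofReal_coe_nnreal]

section Carleson

variable {α : Type*} {P : Set α → Prop}

def maximalFunction (P : Set α → Prop) (a : Set α → ℝ≥0) (x : α) : ℝ≥0∞ :=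
  ⨆ (R : Set α) (_ : P R) (_ : x ∈ R), (a R : ℝ≥0∞)

-- Finite and measurable, unlike `maximalFunction`, so the layer-cake formula applies to it.
def finsetMaximalFunction (s : Finset {R : Set α // P R}) (a : Set α → ℝ≥0) : α → ℝ≥0 :=
  s.sup fun R => R.1.indicator fun _ => a R.1

lemma le_finsetMaximalFunction {s : Finset {R : Set α // P R}} {R : {R : Set α // P R}}
    (hR : R ∈ s) (a : Set α → ℝ≥0) {x : α} (hx : x ∈ R.1) :
    a R.1 ≤ finsetMaximalFunction s a x := by
  rw [finsetMaximalFunction, Finset.sup_apply, ← indicator_of_mem hx fun _ => a R.1]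
  exact Finset.le_sup (f := fun R : {R : Set α // P R} => R.1.indicator (fun _ => a R.1) x) hR

lemma finsetMaximalFunction_le_maximalFunction (s : Finset {R : Set α // P R})
    (a : Set α → ℝ≥0) (x : α) :
    (finsetMaximalFunction s a x : ℝ≥0∞) ≤ maximalFunction P a x := by
  rw [finsetMaximalFunction, Finset.sup_apply, ENNReal.coe_finset_sup]
  refine Finset.sup_le fun R _ => ?_
  by_cases hx : x ∈ R.1
  · rw [indicator_of_mem hx]
    exact le_iSup₂_of_le R.1 R.2 (le_iSup_of_le hx le_rfl)
  · simp [indicator_of_notMem hx]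

variable [MeasurableSpace α]

def SatisfiesCarleson (μ : Measure α) (P : Set α → Prop) (lam : Set α → ℝ≥0) (C : ℝ≥0∞) :
    Prop :=
  ∀ U : Set α, MeasurableSet U →
    (∑' R : {R : Set α // P R ∧ R ⊆ U}, (lam R.1 : ℝ≥0∞)) ≤ C * μ U

variable {μ : Measure α} {lam : Set α → ℝ≥0} {C : ℝ≥0∞}

lemma measurable_finsetMaximalFunction (hP : ∀ R, P R → MeasurableSet R)
    (s : Finset {R : Set α // P R}) (a : Set α → ℝ≥0) :
    Measurable (finsetMaximalFunction s a) :=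
  Finset.sup_induction measurable_const (fun _ hf _ hg => hf.sup hg)
    fun R _ => measurable_const.indicator (hP _ R.2)

lemma SatisfiesCarleson.sum_le_mul_measure_biUnion (hP : ∀ R, P R → MeasurableSet R)
    (h : SatisfiesCarleson μ P lam C) (s : Finset {R : Set α // P R}) :
    ∑ R ∈ s, (lam R.1 : ℝ≥0∞) ≤ C * μ (⋃ R ∈ s, R.1) := by
  let U := ⋃ R ∈ s, R.1
  let toSub : s → {R : Set α // P R ∧ R ⊆ U} := fun R =>
    ⟨R.1.1, R.1.2, subset_biUnion_of_mem (u := fun R : {R : Set α // P R} => R.1) R.2⟩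
  have hinj : Function.Injective toSub := fun R R' hRR' =>
    Subtype.ext <| Subtype.ext <| by simpa [toSub] using congrArg Subtype.val hRR'
  calc ∑ R ∈ s, (lam R.1 : ℝ≥0∞) = ∑' R : s, (lam R.1.1 : ℝ≥0∞) :=
        (Finset.tsum_subtype s fun R => (lam R.1 : ℝ≥0∞)).symm
    _ ≤ ∑' R : {R : Set α // P R ∧ R ⊆ U}, (lam R.1 : ℝ≥0∞) :=
        ENNReal.tsum_comp_le_tsum_of_injective hinj fun R => (lam R.1 : ℝ≥0∞)
    _ ≤ C * μ U := h U (s.measurableSet_biUnion fun R _ => hP _ R.2)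

lemma SatisfiesCarleson.sum_indicator_Iio_le (hP : ∀ R, P R → MeasurableSet R)
    (h : SatisfiesCarleson μ P lam C) (s : Finset {R : Set α // P R}) (a : Set α → ℝ≥0)
    (t : ℝ) :
    ∑ R ∈ s, (Iio (a R.1 : ℝ)).indicator (fun _ => (lam R.1 : ℝ≥0∞)) t ≤
      C * μ {x | t < finsetMaximalFunction s a x} := by
  have hsub : (⋃ R ∈ s.filter fun R => t < a R.1, R.1) ⊆
      {x | t < finsetMaximalFunction s a x} := by
    refine iUnion₂_subset fun R hR x hx => ?_
    rw [Finset.mem_filter] at hR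
    exact hR.2.trans_le (NNReal.coe_le_coe.mpr (le_finsetMaximalFunction hR.1 a hx))
  calc ∑ R ∈ s, (Iio (a R.1 : ℝ)).indicator (fun _ => (lam R.1 : ℝ≥0∞)) t
      = ∑ R ∈ s.filter fun R => t < a R.1, (lam R.1 : ℝ≥0∞) := by
        simp only [indicator_apply, mem_Iio, Finset.sum_filter]
    _ ≤ C * μ (⋃ R ∈ s.filter fun R => t < a R.1, R.1) := h.sum_le_mul_measure_biUnion hP _
    _ ≤ C * μ {x | t < finsetMaximalFunction s a x} := by gcongr

lemma SatisfiesCarleson.sum_mul_le_lintegral_finsetMaximalFunction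
    (hP : ∀ R, P R → MeasurableSet R) (h : SatisfiesCarleson μ P lam C)
    (s : Finset {R : Set α // P R}) (a : Set α → ℝ≥0) :
    ∑ R ∈ s, (lam R.1 : ℝ≥0∞) * a R.1 ≤ C * ∫⁻ x, finsetMaximalFunction s a x ∂μ := by
  have hmeas := measurable_finsetMaximalFunction hP s a
  have hlevel : Measurable fun t : ℝ => μ {x | t < finsetMaximalFunction s a x} :=
    Antitone.measurable fun t t' htt' => measure_mono fun x (hx : t' < _) => htt'.trans_lt hx
  calc ∑ R ∈ s, (lam R.1 : ℝ≥0∞) * a R.1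
      = ∑ R ∈ s, ∫⁻ t in Ioi (0 : ℝ),
          (Iio (a R.1 : ℝ)).indicator (fun _ => (lam R.1 : ℝ≥0∞)) t := by
        simp only [mul_coe_eq_setLIntegral_indicator_Iio]
    _ = ∫⁻ t in Ioi (0 : ℝ),
          ∑ R ∈ s, (Iio (a R.1 : ℝ)).indicator (fun _ => (lam R.1 : ℝ≥0∞)) t :=
        (lintegral_finsetSum _ fun R _ => measurable_const.indicator measurableSet_Iio).symm
    _ ≤ ∫⁻ t in Ioi (0 : ℝ), C * μ {x | t < finsetMaximalFunction s a x} :=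
        lintegral_mono fun t => h.sum_indicator_Iio_le hP s a t
    _ = C * ∫⁻ t in Ioi (0 : ℝ), μ {x | t < finsetMaximalFunction s a x} :=
        lintegral_const_mul C hlevel
    _ = C * ∫⁻ x, finsetMaximalFunction s a x ∂μ := by
        rw [← lintegral_eq_lintegral_meas_lt μ (ae_of_all _ fun x => NNReal.coe_nonneg _)
          (measurable_coe_nnreal_real.comp hmeas).aemeasurable]
        simp only [ENNReal.ofReal_coe_nnreal]

lemma SatisfiesCarleson.tsum_mul_le (hP : ∀ R, P R → MeasurableSet R)
    (h : SatisfiesCarleson μ P lam C) (a : Set α → ℝ≥0) :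
    ∑' R : {R : Set α // P R}, (lam R.1 : ℝ≥0∞) * a R.1 ≤
      C * ∫⁻ x, maximalFunction P a x ∂μ := by
  rw [ENNReal.tsum_eq_iSup_sum]
  refine iSup_le fun s => (h.sum_mul_le_lintegral_finsetMaximalFunction hP s a).trans ?_
  gcongr with x
  exact finsetMaximalFunction_le_maximalFunction s a x

lemma satisfiesCarleson_of_tsum_mul_le
    (h : ∀ a : Set α → ℝ≥0, ∑' R : {R : Set α // P R}, (lam R.1 : ℝ≥0∞) * a R.1 ≤
      C * ∫⁻ x, maximalFunction P a x ∂μ) :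
    SatisfiesCarleson μ P lam C := by
  intro U hU
  classical
  let a : Set α → ℝ≥0 := fun R => if R ⊆ U then 1 else 0
  have hmax : ∀ x, maximalFunction P a x ≤ U.indicator 1 x := fun x =>
    iSup₂_le fun R _ => iSup_le fun hx => by
      by_cases hRU : R ⊆ U
      · simp [a, hRU, hRU hx]
      · simp [a, hRU]
  have hinj : Function.Injective
      fun R : {R : Set α // P R ∧ R ⊆ U} => (⟨R.1, R.2.1⟩ : {R : Set α // P R}) :=
    fun R R' hRR' => Subtype.ext <| by simpa using congrArg Subtype.val hRR'
  calc ∑' R : {R : Set α // P R ∧ R ⊆ U}, (lam R.1 : ℝ≥0∞)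
      = ∑' R : {R : Set α // P R ∧ R ⊆ U}, (lam R.1 : ℝ≥0∞) * a R.1 :=
        tsum_congr fun R => by simp [a, R.2.2]
    _ ≤ ∑' R : {R : Set α // P R}, (lam R.1 : ℝ≥0∞) * a R.1 :=
        ENNReal.tsum_comp_le_tsum_of_injective hinj fun R => (lam R.1 : ℝ≥0∞) * a R.1
    _ ≤ C * ∫⁻ x, maximalFunction P a x ∂μ := h a
    _ ≤ C * μ U := by
        gcongr
        exact (lintegral_mono hmax).trans (lintegral_indicator_one hU).le

theorem satisfiesCarleson_iff (hP : ∀ R, P R → MeasurableSet R) :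
    SatisfiesCarleson μ P lam C ↔ ∀ a : Set α → ℝ≥0,
      ∑' R : {R : Set α // P R}, (lam R.1 : ℝ≥0∞) * a R.1 ≤
        C * ∫⁻ x, maximalFunction P a x ∂μ :=
  ⟨fun h => h.tsum_mul_le hP, satisfiesCarleson_of_tsum_mul_le⟩

end Carleson

theorem carleson_embedding_general
    (n₁ n₂ : ℕ)
    (ω₁ : ℤ → Rn n₁) (ω₂ : ℤ → Rn n₂)
    (lam : Set (Rnn n₁ n₂) → ℝ≥0) (C : ℝ≥0∞) :
    (∀ U : Set (Rnn n₁ n₂), MeasurableSet U →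
        (∑' R : {R : Set (Rnn n₁ n₂) // IsBiGridRect ω₁ ω₂ R ∧ R ⊆ U},
          (lam R.1 : ℝ≥0∞)) ≤ C * volume U) ↔
      (∀ a : Set (Rnn n₁ n₂) → ℝ≥0,
        (∑' R : {R : Set (Rnn n₁ n₂) // IsBiGridRect ω₁ ω₂ R},
          (lam R.1 : ℝ≥0∞) * (a R.1 : ℝ≥0∞)) ≤
          C * ∫⁻ x, ⨆ (R : Set (Rnn n₁ n₂)) (_ : IsBiGridRect ω₁ ω₂ R) (_ : x ∈ R),
            (a R : ℝ≥0∞)) :=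
  satisfiesCarleson_iff fun _ hR => hR.measurableSet

/-- bi-parameter dyadic Carleson embedding theorem, with the
constant preserved in both directions. -/
theorem carleson_embedding
    (n₁ n₂ : ℕ) (hn₁ : 1 ≤ n₁) (hn₂ : 1 ≤ n₂)
    (ω₁ : ℤ → Rn n₁) (ω₂ : ℤ → Rn n₂) (hω₁ : IsGridParam ω₁) (hω₂ : IsGridParam ω₂)
    (lam : Set (Rnn n₁ n₂) → ℝ≥0) (C : ℝ≥0∞) (hC : C ≠ ⊤) :
    (∀ U : Set (Rnn n₁ n₂), MeasurableSet U →
        (∑' R : {R : Set (Rnn n₁ n₂) // IsBiGridRect ω₁ ω₂ R ∧ R ⊆ U},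
          (lam R.1 : ℝ≥0∞)) ≤ C * volume U) ↔
      (∀ a : Set (Rnn n₁ n₂) → ℝ≥0,
        (∑' R : {R : Set (Rnn n₁ n₂) // IsBiGridRect ω₁ ω₂ R},
          (lam R.1 : ℝ≥0∞) * (a R.1 : ℝ≥0∞)) ≤
          C * ∫⁻ x, ⨆ (R : Set (Rnn n₁ n₂)) (_ : IsBiGridRect ω₁ ω₂ R) (_ : x ∈ R),
            (a R : ℝ≥0∞)) :=
  carleson_embedding_general n₁ n₂ ω₁ ω₂ lam C
end
end

section
/- Let n ≥ 1, θ ∈ (0,1), and let F₃ : [0,∞) → [0,∞) be bounded and non-increasing. For a cube Q ⊂ ℝ^n define F̃₃(Q) := Σ_{k=0}^∞ 2^{−kθ} F₃(rd(2^k Q, 𝕀)). Then for every λ ≥ 1 and every cube Q ⊂ ℝ^n, F̃₃(Q) ≤ F̃₃(λQ) ≤ (2λ)^θ F̃₃(Q). -/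
open MeasureTheory Set
open scoped ENNReal NNReal

noncomputable section

lemma sDist_anti_left {α : Type*} [PseudoMetricSpace α] {E E' F : Set α} (h : E ⊆ E')
    (hE : E.Nonempty) (hF : F.Nonempty) : sDist E' F ≤ sDist E F := by
  obtain ⟨x, hx⟩ := hE
  obtain ⟨y, hy⟩ := hF
  refine csInf_le_csInf ⟨0, ?_⟩ ⟨dist x y, (x, y), ⟨hx, hy⟩, rfl⟩
    (image_mono (prod_mono h le_rfl))
  rintro _ ⟨q, _, rfl⟩
  exact dist_nonneg

namespace Cube

variable {n : ℕ}

lemma toSet_nonempty (I : Cube n) : I.toSet.Nonempty :=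
  ⟨I.corner, fun _ => ⟨le_rfl, lt_add_of_pos_right _ I.len_pos⟩⟩

lemma dilate_dilate (Q : Cube n) {a b : ℝ} (ha : 0 < a) (hb : 0 < b) :
    (Q.dilate a ha).dilate b hb = Q.dilate (b * a) (mul_pos hb ha) := by
  simp only [dilate, center, mk.injEq]
  exact ⟨funext fun _ => by ring, by ring⟩

lemma toSet_dilate_mono (Q : Cube n) {a b : ℝ} (ha : 0 < a) (hb : 0 < b) (hab : a ≤ b) :
    (Q.dilate a ha).toSet ⊆ (Q.dilate b hb).toSet := by
  intro x hx i
  obtain ⟨hlo, hhi⟩ := hx i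
  have hℓ := Q.len_pos
  simp only [dilate, center] at hlo hhi ⊢
  constructor <;> nlinarith

end Cube

lemma relDist_dilate_anti {n : ℕ} (Q J : Cube n) {a b : ℝ} (ha : 0 < a) (hb : 0 < b)
    (hab : a ≤ b) : relDist (Q.dilate b hb) J ≤ relDist (Q.dilate a ha) J :=
  div_le_div₀ (sDist_nonneg _ _)
    (sDist_anti_left (Q.toSet_dilate_mono ha hb hab) (Cube.toSet_nonempty _) J.toSet_nonempty)
    (lt_max_of_lt_left (Q.dilate a ha).len_pos)
    (max_le_max (mul_le_mul_of_nonneg_right hab Q.len_pos.le) le_rfl)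

lemma AntitoneOn.relDist_dilate_le {n : ℕ} {F : ℝ → ℝ} (hF : AntitoneOn F (Ici 0))
    (Q J : Cube n) {a b : ℝ} (ha : 0 < a) (hb : 0 < b) (hab : a ≤ b) :
    F (relDist (Q.dilate a ha) J) ≤ F (relDist (Q.dilate b hb) J) :=
  hF (relDist_nonneg _ _) (relDist_nonneg _ _) (relDist_dilate_anti Q J ha hb hab)

lemma exists_two_pow_mem_Icc {lam : ℝ} (hlam : 1 ≤ lam) :
    ∃ m : ℕ, lam ≤ 2 ^ m ∧ 2 ^ m ≤ 2 * lam := by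
  obtain ⟨m, hle, hlt⟩ := exists_nat_pow_near hlam one_lt_two
  exact ⟨m + 1, hlt.le, by rw [pow_succ']; linarith⟩

lemma summable_two_rpow_mul_of_bounded {θ : ℝ} (hθ : 0 < θ) {u : ℕ → ℝ} {C : ℝ}
    (hu0 : ∀ k, 0 ≤ u k) (huC : ∀ k, u k ≤ C) :
    Summable fun k : ℕ => (2 : ℝ) ^ (-(k : ℝ) * θ) * u k := by
  have hgeom : Summable fun k : ℕ => ((2 : ℝ) ^ (-θ)) ^ k * C :=
    (summable_geometric_of_lt_one (by positivity)
      (Real.rpow_lt_one_of_one_lt_of_neg one_lt_two (neg_neg_of_pos hθ))).mul_right C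
  refine hgeom.of_nonneg_of_le (fun k => mul_nonneg (by positivity) (hu0 k)) fun k => ?_
  have hweight : (2 : ℝ) ^ (-(k : ℝ) * θ) = ((2 : ℝ) ^ (-θ)) ^ k := by
    rw [← Real.rpow_natCast, ← Real.rpow_mul zero_le_two, neg_mul_comm, mul_comm]
  rw [hweight]
  exact mul_le_mul_of_nonneg_left (huC k) (by positivity)

lemma tsum_two_rpow_mul_shift_le (θ : ℝ) {u : ℕ → ℝ} (hu0 : ∀ k, 0 ≤ u k)
    (hu : Summable fun k : ℕ => (2 : ℝ) ^ (-(k : ℝ) * θ) * u k) (m : ℕ) :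
    ∑' k : ℕ, (2 : ℝ) ^ (-(k : ℝ) * θ) * u (k + m) ≤
      (2 : ℝ) ^ ((m : ℝ) * θ) * ∑' k : ℕ, (2 : ℝ) ^ (-(k : ℝ) * θ) * u k := by
  have hweight : ∀ k : ℕ, (2 : ℝ) ^ (-(k : ℝ) * θ) =
      (2 : ℝ) ^ ((m : ℝ) * θ) * (2 : ℝ) ^ (-((k + m : ℕ) : ℝ) * θ) := fun k => by
    rw [← Real.rpow_add two_pos]; push_cast; ring_nf
  calc ∑' k : ℕ, (2 : ℝ) ^ (-(k : ℝ) * θ) * u (k + m)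
      = ∑' k : ℕ, (2 : ℝ) ^ ((m : ℝ) * θ) * ((2 : ℝ) ^ (-((k + m : ℕ) : ℝ) * θ) * u (k + m)) :=
        tsum_congr fun k => by rw [hweight k, mul_assoc]
    _ = (2 : ℝ) ^ ((m : ℝ) * θ) * ∑' k : ℕ, (2 : ℝ) ^ (-((k + m : ℕ) : ℝ) * θ) * u (k + m) :=
        tsum_mul_left
    _ ≤ (2 : ℝ) ^ ((m : ℝ) * θ) * ∑' k : ℕ, (2 : ℝ) ^ (-(k : ℝ) * θ) * u k :=
        mul_le_mul_of_nonneg_left (tsum_comp_le_tsum_of_inj hu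
          (fun k => mul_nonneg (by positivity) (hu0 k)) (add_left_injective m)) (by positivity)

lemma Ft3_dilate_eq {n : ℕ} (θ : ℝ) (F₃ : ℝ → ℝ) (Q : Cube n) {lam : ℝ} (hlam : 0 < lam) :
    Ft3 θ F₃ (Q.dilate lam hlam) = ∑' k : ℕ, (2 : ℝ) ^ (-(k : ℝ) * θ) *
      F₃ (relDist (Q.dilate ((2 : ℝ) ^ k * lam) (by positivity)) (unitCube n)) := by
  simp only [Ft3, Cube.dilate_dilate]

theorem Ft3_dilate_bounds_general
    (n : ℕ) (θ : ℝ) (hθ0 : 0 < θ)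
    (F₃ : ℝ → ℝ) (hF₃0 : ∀ t, 0 ≤ F₃ t)
    (hF₃m : AntitoneOn F₃ (Set.Ici 0))
    (lam : ℝ) (hlam : 1 ≤ lam) (Q : Cube n) :
    Ft3 θ F₃ Q ≤ Ft3 θ F₃ (Q.dilate lam (lt_of_lt_of_le one_pos hlam)) ∧
      Ft3 θ F₃ (Q.dilate lam (lt_of_lt_of_le one_pos hlam)) ≤ (2 * lam) ^ θ * Ft3 θ F₃ Q := by
  have hlam0 : 0 < lam := one_pos.trans_le hlam
  set u : ℕ → ℝ := fun k => F₃ (relDist (Q.dilate ((2 : ℝ) ^ k) (by positivity)) (unitCube n))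
  set v : ℕ → ℝ := fun k =>
    F₃ (relDist (Q.dilate ((2 : ℝ) ^ k * lam) (by positivity)) (unitCube n))
  have hu_le_F₃0 : ∀ k, u k ≤ F₃ 0 := fun k =>
    hF₃m self_mem_Ici (relDist_nonneg _ _) (relDist_nonneg _ _)
  have hv_le_F₃0 : ∀ k, v k ≤ F₃ 0 := fun k =>
    hF₃m self_mem_Ici (relDist_nonneg _ _) (relDist_nonneg _ _)
  have hu := summable_two_rpow_mul_of_bounded hθ0 (fun k => hF₃0 _) hu_le_F₃0
  have hv := summable_two_rpow_mul_of_bounded hθ0 (fun k => hF₃0 _) hv_le_F₃0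
  obtain ⟨m, hlam_le, hle_two_lam⟩ := exists_two_pow_mem_Icc hlam
  have hv_le_shift : ∀ k, v k ≤ u (k + m) := fun k =>
    hF₃m.relDist_dilate_le Q _ _ _ (by rw [pow_add]; gcongr)
  change ∑' k, _ * u k ≤ _ ∧ _
  rw [Ft3_dilate_eq θ F₃ Q hlam0]
  refine ⟨hu.tsum_le_tsum (fun k => ?_) hv, ?_⟩
  · exact mul_le_mul_of_nonneg_left
      (hF₃m.relDist_dilate_le Q _ _ _ (le_mul_of_one_le_right (by positivity) hlam)) (by positivity)
  · calc ∑' k : ℕ, (2 : ℝ) ^ (-(k : ℝ) * θ) * v k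
        ≤ ∑' k : ℕ, (2 : ℝ) ^ (-(k : ℝ) * θ) * u (k + m) :=
          hv.tsum_le_tsum (fun k => mul_le_mul_of_nonneg_left (hv_le_shift k) (by positivity))
            (summable_two_rpow_mul_of_bounded hθ0 (fun k => hF₃0 _) fun k => hu_le_F₃0 (k + m))
      _ ≤ (2 : ℝ) ^ ((m : ℝ) * θ) * ∑' k : ℕ, (2 : ℝ) ^ (-(k : ℝ) * θ) * u k :=
          tsum_two_rpow_mul_shift_le θ (fun k => hF₃0 _) hu m
      _ ≤ (2 * lam) ^ θ * ∑' k : ℕ, (2 : ℝ) ^ (-(k : ℝ) * θ) * u k := by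
          rw [Real.rpow_mul zero_le_two, Real.rpow_natCast]
          exact mul_le_mul_of_nonneg_right (Real.rpow_le_rpow (by positivity) hle_two_lam hθ0.le)
            (tsum_nonneg fun k => mul_nonneg (by positivity) (hF₃0 _))

/-- monotonicity and a doubling bound for `F̃₃` under dilations:
for `λ ≥ 1`, `F̃₃(Q) ≤ F̃₃(λQ) ≤ (2λ)^θ F̃₃(Q)`. -/
theorem Ft3_dilate_bounds
    (n : ℕ) (hn : 1 ≤ n) (θ : ℝ) (hθ0 : 0 < θ) (hθ1 : θ < 1)
    (F₃ : ℝ → ℝ) (hF₃0 : ∀ t, 0 ≤ F₃ t) (hF₃b : BddAbove (Set.range F₃))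
    (hF₃m : AntitoneOn F₃ (Set.Ici 0))
    (lam : ℝ) (hlam : 1 ≤ lam) (Q : Cube n) :
    Ft3 θ F₃ Q ≤ Ft3 θ F₃ (Q.dilate lam (lt_of_lt_of_le one_pos hlam)) ∧
      Ft3 θ F₃ (Q.dilate lam (lt_of_lt_of_le one_pos hlam)) ≤ (2 * lam) ^ θ * Ft3 θ F₃ Q :=
  Ft3_dilate_bounds_general n θ hθ0 F₃ hF₃0 hF₃m lam hlam Q
end
end
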